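/- arXiv:1705.04291 — 3 statements merged into one kernel-verified Lean document; each statement's English description precedes it below -/
import Mathlib

section
/- Let T be the vertex-weighted tree on 7 vertices {m, m1, m2, m3, u1, u2, u3} with edge set {m m1, m m2, m m3, m1 u1, m2 u2, m3 u3}, with positive vertex weights μ(m)=μ, μ(m_i)=μ_i', μ(u_i)=μ_i'' for i=1,2,3, and let T' be the vertex-weighted tree on the same weighted vertex set obtained from T by replacing edges m m3 and m1 u1 with edges m u1 and m1 m3. If μ_1'+μ_1'' ≤ μ_2'+μ_2'' ≤ μ_3'+μ_3'', then VWWI(T) < VWWI(T'). -/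
/-- The vertex-weighted Wiener index: `(1/2) ∑_{u,v} μ(u) μ(v) d_G(u,v)`. -/
noncomputable def VWWI {V : Type*} [Fintype V] (G : SimpleGraph V) (μ : V → ℝ) : ℝ :=
  (1 / 2) * ∑ u : V, ∑ v : V, μ u * μ v * (G.dist u v : ℝ)

/-- The tree `T` on vertices `m = 0, m₁ = 1, m₂ = 2, m₃ = 3, u₁ = 4, u₂ = 5, u₃ = 6`
with edges `m m₁, m m₂, m m₃, m₁ u₁, m₂ u₂, m₃ u₃`. -/
def Ttree : SimpleGraph (Fin 7) :=
  SimpleGraph.fromEdgeSet {s(0, 1), s(0, 2), s(0, 3), s(1, 4), s(2, 5), s(3, 6)}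

/-- The tree `T'` obtained from `T` by replacing edges `m m₃` and `m₁ u₁`
with edges `m u₁` and `m₁ m₃`. -/
def Ttree' : SimpleGraph (Fin 7) :=
  SimpleGraph.fromEdgeSet {s(0, 1), s(0, 2), s(0, 4), s(1, 3), s(2, 5), s(3, 6)}

/-!
Tabulating the distances of the two trees and expanding, the difference of the two indices
factors as `(μ + μ₂' + μ₂'' - μ₁') (μ₃' + μ₃'' - μ₁'')`. Both factors are positive since
`μ₁' + μ₁'' ≤ μ₂' + μ₂'' ≤ μ₃' + μ₃''` and the weights of `m`, `m₁` and `u₁` are positive.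
-/

namespace SimpleGraph

variable {V : Type*} {G : SimpleGraph V} {d : V → V → ℕ}

theorem le_length_of_forall_adj_le (h₀ : ∀ u, d u u = 0)
    (hadj : ∀ u v w, G.Adj u v → d u w ≤ d v w + 1) {u w : V} (p : G.Walk u w) :
    d u w ≤ p.length := by
  induction p with
  | nil => simp [h₀]
  | cons h _ ih => simpa using (hadj _ _ _ h).trans (by omega)

theorem exists_walk_length_eq_of_exists_adj (hzero : ∀ u v, d u v = 0 → u = v)
    (hstep : ∀ u v, d u v ≠ 0 → ∃ w, G.Adj v w ∧ d u w + 1 = d u v) (u v : V) :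
    ∃ p : G.Walk u v, p.length = d u v := by
  induction hn : d u v generalizing v with
  | zero => obtain rfl := hzero u v hn; exact ⟨.nil, rfl⟩
  | succ n ih =>
    obtain ⟨w, hvw, hw⟩ := hstep u v (by omega)
    obtain ⟨p, hp⟩ := ih w (by omega)
    exact ⟨p.concat hvw.symm, by simp [hp]⟩

theorem dist_eq_of_forall_adj (h₀ : ∀ u, d u u = 0) (hzero : ∀ u v, d u v = 0 → u = v)
    (hadj : ∀ u v w, G.Adj u v → d u w ≤ d v w + 1)
    (hstep : ∀ u v, d u v ≠ 0 → ∃ w, G.Adj v w ∧ d u w + 1 = d u v) (u v : V) :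
    G.dist u v = d u v := by
  obtain ⟨p, hp⟩ := exists_walk_length_eq_of_exists_adj hzero hstep u v
  obtain ⟨q, hq⟩ := Reachable.exists_walk_length_eq_dist ⟨p⟩
  exact le_antisymm (hp ▸ dist_le p) (hq ▸ le_length_of_forall_adj_le h₀ hadj q)

end SimpleGraph

def Ttree.distTable : Fin 7 → Fin 7 → ℕ :=
  ![![0, 1, 1, 1, 2, 2, 2], ![1, 0, 2, 2, 1, 3, 3], ![1, 2, 0, 2, 3, 1, 3], ![1, 2, 2, 0, 3, 3, 1],
    ![2, 1, 3, 3, 0, 4, 4], ![2, 3, 1, 3, 4, 0, 4], ![2, 3, 3, 1, 4, 4, 0]]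

def Ttree'.distTable : Fin 7 → Fin 7 → ℕ :=
  ![![0, 1, 1, 2, 1, 2, 3], ![1, 0, 2, 1, 2, 3, 2], ![1, 2, 0, 3, 2, 1, 4], ![2, 1, 3, 0, 3, 4, 1],
    ![1, 2, 2, 3, 0, 3, 4], ![2, 3, 1, 4, 3, 0, 5], ![3, 2, 4, 1, 4, 5, 0]]

theorem Ttree_dist : ∀ u v, Ttree.dist u v = Ttree.distTable u v :=
  SimpleGraph.dist_eq_of_forall_adj (by decide) (by decide) (by unfold Ttree; decide)
    (by unfold Ttree; decide)

theorem Ttree'_dist : ∀ u v, Ttree'.dist u v = Ttree'.distTable u v :=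
  SimpleGraph.dist_eq_of_forall_adj (by decide) (by decide) (by unfold Ttree'; decide)
    (by unfold Ttree'; decide)

theorem VWWI_Ttree'_sub_VWWI_Ttree (μ μ₁' μ₂' μ₃' μ₁'' μ₂'' μ₃'' : ℝ) :
    VWWI Ttree' ![μ, μ₁', μ₂', μ₃', μ₁'', μ₂'', μ₃''] -
        VWWI Ttree ![μ, μ₁', μ₂', μ₃', μ₁'', μ₂'', μ₃''] =
      (μ + μ₂' + μ₂'' - μ₁') * (μ₃' + μ₃'' - μ₁'') := by
  simp only [VWWI, Fin.sum_univ_seven, Ttree_dist, Ttree'_dist, Ttree.distTable,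
    Ttree'.distTable, Matrix.cons_val]
  push_cast
  ring

theorem VWWI_lt_general (μ μ₁' μ₂' μ₃' μ₁'' μ₂'' μ₃'' : ℝ)
    (hμ : 0 < μ) (hμ₁' : 0 < μ₁')
    (hμ₁'' : 0 < μ₁'')
    (h12 : μ₁' + μ₁'' ≤ μ₂' + μ₂'') (h23 : μ₂' + μ₂'' ≤ μ₃' + μ₃'') :
    VWWI Ttree ![μ, μ₁', μ₂', μ₃', μ₁'', μ₂'', μ₃''] <
      VWWI Ttree' ![μ, μ₁', μ₂', μ₃', μ₁'', μ₂'', μ₃''] := by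
  rw [← sub_pos, VWWI_Ttree'_sub_VWWI_Ttree]
  exact mul_pos (by linarith) (by linarith)

theorem VWWI_lt (μ μ₁' μ₂' μ₃' μ₁'' μ₂'' μ₃'' : ℝ)
    (hμ : 0 < μ) (hμ₁' : 0 < μ₁') (hμ₂' : 0 < μ₂') (hμ₃' : 0 < μ₃')
    (hμ₁'' : 0 < μ₁'') (hμ₂'' : 0 < μ₂'') (hμ₃'' : 0 < μ₃'')
    (h12 : μ₁' + μ₁'' ≤ μ₂' + μ₂'') (h23 : μ₂' + μ₂'' ≤ μ₃' + μ₃'') :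
    VWWI Ttree ![μ, μ₁', μ₂', μ₃', μ₁'', μ₂'', μ₃''] <
      VWWI Ttree' ![μ, μ₁', μ₂', μ₃', μ₁'', μ₂'', μ₃''] :=
  VWWI_lt_general μ μ₁' μ₂' μ₃' μ₁'' μ₂'' μ₃'' hμ hμ₁' hμ₁'' h12 h23
end

section
/- Let T be a vertex-weighted caterpillar with backbone v_1, ..., v_q and weight function μ_T. Let W(T) denote the set of pendent vertices of T, let w_T(k) = ∑_{v ∈ A_T(k)} μ_T(v) be the weight associated with backbone position k, and let p_T(k) = ∑_{l=1}^q w_T(l)|k−l| be the price of position k. Then VWWI(T) = (1/2) ∑_{k=1}^q w_T(k) p_T(k) + (∑_{v ∈ W(T)} μ_T(v)) (∑_{v ∈ V(T)} μ_T(v)) − ∑_{v ∈ W(T)} μ_T(v)². -/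
open scoped Classical

/-- Degree of a vertex: the number of its neighbors. -/
noncomputable def degN {V : Type*} (G : SimpleGraph V) (v : V) : ℕ :=
  (G.neighborSet v).ncard

/-- The set of internal (non-pendent) vertices of a graph. -/
def internalSet {V : Type*} (G : SimpleGraph V) : Set V := {v | degN G v ≠ 1}

/-- A path is a tree with exactly two pendent vertices. -/
def IsPathGraph {V : Type*} (G : SimpleGraph V) : Prop :=
  G.IsTree ∧ {v | degN G v = 1}.ncard = 2

/-- A caterpillar is a tree in which deleting all pendent vertices
(and their incident edges) yields a path. -/
def IsCaterpillar {V : Type*} (G : SimpleGraph V) : Prop :=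
  G.IsTree ∧ IsPathGraph (G.induce (internalSet G))

/-- Membership of a vertex-weighted tree `(G, w)` in `WT(μ, d)`: `G` is a tree whose
vertices can be indexed so that the `i`-th vertex has degree `d i` and weight `μ i`. -/
def memWT {n : ℕ} (d : Fin n → ℕ) (μ : Fin n → ℝ)
    (G : SimpleGraph (Fin n)) (w : Fin n → ℝ) : Prop :=
  G.IsTree ∧ ∃ σ : Equiv.Perm (Fin n), ∀ i, degN G (σ i) = d i ∧ w (σ i) = μ i

/-- `b : Fin q → V` enumerates, in path order, the backbone (the internal vertices)
of the caterpillar `G`. -/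
def IsBackbone {V : Type*} (G : SimpleGraph V) {q : ℕ} (b : Fin q → V) : Prop :=
  Function.Injective b ∧ Set.range b = internalSet G ∧
    ∀ (k : ℕ) (h : k + 1 < q), G.Adj (b ⟨k, by omega⟩) (b ⟨k + 1, h⟩)

/-- `v` is associated with backbone position `k`: either `v` is the `k`-th backbone
vertex, or `v` is pendent and adjacent to it. -/
def assoc {V : Type*} (G : SimpleGraph V) {q : ℕ} (b : Fin q → V) (k : Fin q) (v : V) : Prop :=
  v = b k ∨ (degN G v = 1 ∧ G.Adj v (b k))

/-- A finite sequence is V-shaped: it first (weakly) decreases, then (weakly) increases. -/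
def VShaped {α : Type*} [Preorder α] {q : ℕ} (a : Fin q → α) : Prop :=
  ∃ kb : Fin q,
    (∀ (k : ℕ) (h : k + 1 < q), k < kb.val → a ⟨k + 1, h⟩ ≤ a ⟨k, by omega⟩) ∧
    (∀ (k : ℕ) (h : k + 1 < q), kb.val ≤ k → a ⟨k, by omega⟩ ≤ a ⟨k + 1, h⟩)

/-- Total weight of the vertices associated with backbone position `k`. -/
noncomputable def wAssoc {V : Type*} [Fintype V] (G : SimpleGraph V) (μ : V → ℝ)
    {q : ℕ} (b : Fin q → V) (k : Fin q) : ℝ :=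
  ∑ v : V, if assoc G b k v then μ v else 0

/-- The price of backbone position `k`: `p(k) = ∑_l w(l) |k - l|`. -/
noncomputable def price {V : Type*} [Fintype V] (G : SimpleGraph V) (μ : V → ℝ)
    {q : ℕ} (b : Fin q → V) (k : Fin q) : ℝ :=
  ∑ l : Fin q, wAssoc G μ b l * ((((k.val : ℤ) - (l.val : ℤ)).natAbs : ℕ) : ℝ)

/-!
Every vertex `v` of the caterpillar has a unique backbone position `pos v`: its own index if it is
internal, the index of its unique neighbour if it is pendent. The backbone is an injective path in
a tree, so `d(b k, b l) = |k - l|`, and a pendent vertex is one step farther than its neighbour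
from every other vertex; hence `d(u, v) = |pos u - pos v| + [u pendent] + [v pendent]` for `u ≠ v`.
Grouping the `|pos u - pos v|` terms by position gives `∑ₖ w(k) p(k)`; the pendent corrections give
`2 (∑_W μ)(∑_V μ)`, which overcounts the diagonal `u = v` (where `d = 0`) by `2 ∑_W μ²`.
-/

namespace SimpleGraph

variable {V : Type*} {G : SimpleGraph V}

theorem eq_of_adj_of_degN_eq_one {u n n' : V} (hu : degN G u = 1) (hn : G.Adj u n)
    (hn' : G.Adj u n') : n' = n := by
  obtain ⟨a, ha⟩ := Set.ncard_eq_one.mp hu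
  have hn : n ∈ G.neighborSet u := hn
  have hn' : n' ∈ G.neighborSet u := hn'
  rw [ha, Set.mem_singleton_iff] at hn hn'
  rw [hn, hn']

theorem exists_adj_of_degN_eq_one {u : V} (hu : degN G u = 1) : ∃ n, G.Adj u n := by
  obtain ⟨a, ha⟩ := Set.ncard_eq_one.mp hu
  exact ⟨a, show a ∈ G.neighborSet u from ha ▸ rfl⟩

theorem Connected.dist_eq_dist_add_one_of_degN_eq_one (hG : G.Connected) {u n x : V}
    (hu : degN G u = 1) (hn : G.Adj u n) (hx : x ≠ u) : G.dist u x = G.dist n x + 1 := by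
  obtain ⟨p, hp⟩ := hG.exists_walk_length_eq_dist u x
  cases p with
  | nil => exact absurd rfl hx
  | cons h p =>
    obtain rfl := eq_of_adj_of_degN_eq_one hu h hn
    have hle : G.dist n x ≤ p.length := dist_le p
    have htri : G.dist u x ≤ G.dist u n + G.dist n x := hG.dist_triangle
    rw [dist_eq_one_iff_adj.mpr hn] at htri
    simp only [Walk.length_cons] at hp
    omega

theorem Connected.degN_ne_one_of_adj_of_degN_eq_one (hG : G.Connected) {u n w : V}
    (hu : degN G u = 1) (hn : G.Adj u n) (hw : degN G w ≠ 1) : degN G n ≠ 1 := by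
  intro hn1
  have hwu : w ≠ u := by rintro rfl; exact hw hu
  have hwn : w ≠ n := by rintro rfl; exact hw hn1
  have h₁ := hG.dist_eq_dist_add_one_of_degN_eq_one hu hn hwu
  have h₂ := hG.dist_eq_dist_add_one_of_degN_eq_one hn1 hn.symm hwn
  omega

theorem IsTree.dist_eq_length_of_isPath (hG : G.IsTree) {u v : V} {p : G.Walk u v}
    (hp : p.IsPath) : G.dist u v = p.length := by
  obtain ⟨p', hp', hl⟩ := hG.connected.exists_path_of_dist u v
  rw [← hl, (hG.existsUnique_path u v).unique hp' hp]

theorem IsTree.dist_eq_natAbs_of_injective_of_adj (hG : G.IsTree) {q : ℕ} {b : Fin q → V}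
    (hb : Function.Injective b)
    (hadj : ∀ (k : ℕ) (h : k + 1 < q), G.Adj (b ⟨k, by omega⟩) (b ⟨k + 1, h⟩)) (k l : Fin q) :
    G.dist (b k) (b l) = ((k : ℤ) - l).natAbs := by
  wlog hkl : k ≤ l generalizing k l
  · rw [dist_comm, this l k (le_of_not_ge hkl)]
    omega
  let f : Fin (l - k + 1) → V := fun t => b ⟨k + t, by omega⟩
  have hchain : (List.ofFn f).IsChain G.Adj :=
    List.isChain_ofFn.mpr fun t ht => hadj (k + t) (by omega)
  have hne : List.ofFn f ≠ [] := by simp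
  let p := Walk.ofSupport (List.ofFn f) hne hchain
  have hp : p.IsPath := by
    refine Walk.IsPath.mk' ?_
    rw [Walk.support_ofSupport, List.nodup_ofFn]
    intro s t hst
    simpa [f, Fin.ext_iff] using hb hst
  have hdist := hG.dist_eq_length_of_isPath hp
  rw [Walk.length_ofSupport, List.length_ofFn, List.head_ofFn, List.getLast_ofFn] at hdist
  convert hdist using 3
  · exact Fin.ext (by simp)
  · ext
    simp only
    omega
  · omega

end SimpleGraph

namespace IsBackbone

open SimpleGraph

variable {V : Type*} {G : SimpleGraph V} {q : ℕ} {b : Fin q → V}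

theorem degN_ne_one (hb : IsBackbone G b) (k : Fin q) : degN G (b k) ≠ 1 :=
  show b k ∈ internalSet G from hb.2.1 ▸ Set.mem_range_self k

theorem exists_pos (hG : G.Connected) (hb : IsBackbone G b) (hq : 0 < q) :
    ∃ pos : V → Fin q, ∀ v k, assoc G b k v ↔ pos v = k := by
  suffices h : ∀ v, ∃ k, ∀ k', assoc G b k' v ↔ k = k' by
    choose pos hpos using h
    exact ⟨pos, hpos⟩
  intro v
  by_cases hv : degN G v = 1
  · obtain ⟨n, hn⟩ := exists_adj_of_degN_eq_one hv
    have hn_int : n ∈ internalSet G :=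
      hG.degN_ne_one_of_adj_of_degN_eq_one hv hn (hb.degN_ne_one ⟨0, hq⟩)
    obtain ⟨k, rfl⟩ : n ∈ Set.range b := hb.2.1 ▸ hn_int
    refine ⟨k, fun k' => ⟨?_, ?_⟩⟩
    · rintro (rfl | ⟨-, hk'⟩)
      · exact absurd hv (hb.degN_ne_one k')
      · exact hb.1 (eq_of_adj_of_degN_eq_one hv hk' hn)
    · rintro rfl
      exact Or.inr ⟨hv, hn⟩
  · obtain ⟨k, rfl⟩ : v ∈ Set.range b := hb.2.1 ▸ hv
    refine ⟨k, fun k' => ⟨?_, ?_⟩⟩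
    · rintro (hk' | ⟨hv', -⟩)
      · exact hb.1 hk'
      · exact absurd hv' hv
    · rintro rfl
      exact Or.inl rfl

variable {pos : V → Fin q}

theorem dist_apply_eq (hG : G.IsTree) (hb : IsBackbone G b)
    (hpos : ∀ v k, assoc G b k v ↔ pos v = k) (k : Fin q) (v : V) :
    G.dist (b k) v = ((k : ℤ) - pos v).natAbs + if degN G v = 1 then 1 else 0 := by
  have hdist := hG.dist_eq_natAbs_of_injective_of_adj hb.1 hb.2.2
  rcases (hpos v (pos v)).mpr rfl with hv | ⟨hv, hadj⟩
  · rw [if_neg (hv ▸ hb.degN_ne_one (pos v)), ← hdist, ← hv, add_zero]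
  · have hne : b k ≠ v := fun h => hb.degN_ne_one k (h ▸ hv)
    rw [if_pos hv, dist_comm, hG.connected.dist_eq_dist_add_one_of_degN_eq_one hv hadj hne,
      hdist, ← Int.natAbs_neg, neg_sub]

theorem dist_eq (hG : G.IsTree) (hb : IsBackbone G b)
    (hpos : ∀ v k, assoc G b k v ↔ pos v = k) {u v : V} (huv : u ≠ v) :
    G.dist u v = ((pos u : ℤ) - pos v).natAbs + (if degN G u = 1 then 1 else 0) +
      (if degN G v = 1 then 1 else 0) := by
  rcases (hpos u (pos u)).mpr rfl with hu | ⟨hu, hadj⟩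
  · rw [if_neg (hu ▸ hb.degN_ne_one (pos u)), add_zero]
    nth_rw 1 [hu]
    exact hb.dist_apply_eq hG hpos (pos u) v
  · rw [if_pos hu, hG.connected.dist_eq_dist_add_one_of_degN_eq_one hu hadj huv.symm,
      hb.dist_apply_eq hG hpos]
    ring

end IsBackbone

section PositionMap

variable {V : Type*} [Fintype V] {G : SimpleGraph V} {q : ℕ} {b : Fin q → V} {pos : V → Fin q}

theorem wAssoc_eq_sum_filter (hpos : ∀ v k, assoc G b k v ↔ pos v = k) (μ : V → ℝ) (k : Fin q) :
    wAssoc G μ b k = ∑ v with pos v = k, μ v := by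
  simp only [wAssoc, hpos, Finset.sum_filter]

theorem sum_mul_comp_eq_sum_wAssoc_mul (hpos : ∀ v k, assoc G b k v ↔ pos v = k) (μ : V → ℝ)
    (g : Fin q → ℝ) : ∑ v, μ v * g (pos v) = ∑ k, wAssoc G μ b k * g k := by
  rw [← Finset.sum_fiberwise Finset.univ pos]
  refine Finset.sum_congr rfl fun k _ => ?_
  rw [wAssoc_eq_sum_filter hpos, Finset.sum_mul]
  refine Finset.sum_congr rfl fun v hv => ?_
  rw [(Finset.mem_filter.mp hv).2]

theorem sum_wAssoc_mul_price (hpos : ∀ v k, assoc G b k v ↔ pos v = k) (μ : V → ℝ) :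
    ∑ k, wAssoc G μ b k * price G μ b k =
      ∑ u, ∑ v, μ u * μ v * ((((pos u : ℤ) - pos v).natAbs : ℕ) : ℝ) := by
  rw [← sum_mul_comp_eq_sum_wAssoc_mul hpos]
  refine Finset.sum_congr rfl fun u _ => ?_
  rw [price, ← sum_mul_comp_eq_sum_wAssoc_mul hpos, Finset.mul_sum]
  refine Finset.sum_congr rfl fun v _ => ?_
  ring

end PositionMap

theorem sum_sum_mul_mul_of_eq_add_ite_add_ite {ι : Type*} [Fintype ι] [DecidableEq ι]
    (P : ι → Prop) [DecidablePred P] (μ : ι → ℝ) {d D : ι → ι → ℝ}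
    (hd : ∀ u v, u ≠ v → d u v = D u v + (if P u then 1 else 0) + (if P v then 1 else 0))
    (hd_self : ∀ u, d u u = 0) (hD_self : ∀ u, D u u = 0) :
    ∑ u, ∑ v, μ u * μ v * d u v =
      ∑ u, ∑ v, μ u * μ v * D u v + 2 * ((∑ v, if P v then μ v else 0) * ∑ v, μ v) -
        2 * ∑ v, if P v then μ v ^ 2 else 0 := by
  have hsplit : ∀ u v, d u v = D u v + (if P u then 1 else 0) + (if P v then 1 else 0) -
      if u = v then 2 * (if P u then 1 else 0) else 0 := by
    intro u v
    by_cases huv : u = v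
    · subst huv
      rw [hd_self, hD_self, if_pos rfl]
      ring
    · rw [hd u v huv, if_neg huv, sub_zero]
  have hleft : ∑ u, ∑ v, μ u * μ v * (if P u then 1 else 0) =
      (∑ v, if P v then μ v else 0) * ∑ v, μ v := by
    rw [Finset.sum_mul_sum]
    refine Finset.sum_congr rfl fun u _ => Finset.sum_congr rfl fun v _ => ?_
    split_ifs <;> ring
  have hright : ∑ u, ∑ v, μ u * μ v * (if P v then 1 else 0) =
      (∑ v, if P v then μ v else 0) * ∑ v, μ v := by
    rw [mul_comm, Finset.sum_mul_sum]
    refine Finset.sum_congr rfl fun u _ => Finset.sum_congr rfl fun v _ => ?_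
    split_ifs <;> ring
  have hdiag : ∑ u, ∑ v, μ u * μ v * (if u = v then 2 * (if P u then 1 else 0) else 0) =
      2 * ∑ v, if P v then μ v ^ 2 else 0 := by
    simp only [mul_ite, mul_zero, Finset.sum_ite_eq, Finset.mem_univ, if_true, Finset.mul_sum]
    refine Finset.sum_congr rfl fun u _ => ?_
    split_ifs <;> ring
  simp only [hsplit, mul_sub, mul_add, Finset.sum_sub_distrib, Finset.sum_add_distrib]
  rw [hleft, hright, hdiag]
  ring

theorem VWWI_caterpillar_formula {V : Type*} [Fintype V] (G : SimpleGraph V)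
    (μ : V → ℝ) (q : ℕ) (hq : 1 ≤ q) (b : Fin q → V)
    (htree : G.IsTree) (hb : IsBackbone G b) :
    VWWI G μ =
      (1 / 2) * (∑ k : Fin q, wAssoc G μ b k * price G μ b k) +
        (∑ v : V, if degN G v = 1 then μ v else 0) * (∑ v : V, μ v) -
        ∑ v : V, if degN G v = 1 then (μ v) ^ 2 else 0 := by
  obtain ⟨pos, hpos⟩ := hb.exists_pos htree.connected hq
  rw [VWWI, sum_sum_mul_mul_of_eq_add_ite_add_ite (fun v => degN G v = 1) μ
    (D := fun u v => ((((pos u : ℤ) - pos v).natAbs : ℕ) : ℝ)) ?_ (by simp) (by simp),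
    sum_wAssoc_mul_price hpos]
  · ring
  · intro u v huv
    exact_mod_cast hb.dist_eq htree hpos huv
end

section
/- Let q ≥ 1 and let P be the q × q real matrix with entries P_{kl} = q − 1 − |k − l|. Then P is positive semidefinite; moreover P = ∑_{i=1}^{q−1} (e_i e_iᵀ + f_i f_iᵀ), where e_i ∈ ℝ^q is the vector whose first i coordinates are 1 and remaining coordinates are 0, and f_i ∈ ℝ^q is the vector whose first i coordinates are 0 and remaining q − i coordinates are 1. -/
open Matrix

/-- The `q × q` matrix with entries `P_{kl} = q - 1 - |k - l|`. -/
def Pmat (q : ℕ) : Matrix (Fin q) (Fin q) ℝ :=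
  fun k l => (q : ℝ) - 1 - |((k : ℕ) : ℝ) - ((l : ℕ) : ℝ)|

/-- `e i ∈ ℝ^q`: the first `i` coordinates are `1`, the rest are `0`. -/
def onesVec (q i : ℕ) : Fin q → ℝ := fun k => if (k : ℕ) < i then 1 else 0

/-- `f i ∈ ℝ^q`: the first `i` coordinates are `0`, the remaining `q - i` are `1`. -/
def onesVec' (q i : ℕ) : Fin q → ℝ := fun k => if (k : ℕ) < i then 0 else 1

/-!
Entry `(k, l)` of `e_i e_iᵀ + f_i f_iᵀ` is `1` exactly when `max k l < i` or `i ≤ min k l`.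
Among `i ∈ [1, q - 1]` there are `q - 1 - max k l` indices of the first kind and `min k l` of
the second, so the sum has entry `q - 1 - (max k l - min k l) = q - 1 - |k - l|`. Each summand
is a sum of Gram matrices `v vᵀ`, hence positive semidefinite, and so is the total.
-/

open Finset

lemma posSemidef_vecMulVec_self {n R : Type*} [Finite n] [Ring R] [PartialOrder R] [StarRing R]
    [StarOrderedRing R] [TrivialStar R] (v : n → R) :
    (vecMulVec v v).PosSemidef := by
  simpa using posSemidef_vecMulVec_self_star v

lemma card_filter_lt_Icc_one (m n : ℕ) : #{i ∈ Icc 1 n | m < i} = n - m := by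
  rw [show {i ∈ Icc 1 n | m < i} = Ioc m n by ext; simp; omega, Nat.card_Ioc]

lemma card_filter_le_Icc_one {m n : ℕ} (h : m ≤ n) : #{i ∈ Icc 1 n | i ≤ m} = m := by
  rw [show {i ∈ Icc 1 n | i ≤ m} = Icc 1 m by ext; simp; omega, Nat.card_Icc,
    Nat.add_sub_cancel]

lemma onesVec_mul_onesVec (q i : ℕ) (k l : Fin q) :
    onesVec q i k * onesVec q i l = if max (k : ℕ) l < i then 1 else 0 := by
  simp only [onesVec, ite_zero_mul_ite_zero, one_mul, max_lt_iff]

lemma onesVec'_mul_onesVec' (q i : ℕ) (k l : Fin q) :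
    onesVec' q i k * onesVec' q i l = if i ≤ min (k : ℕ) l then 1 else 0 := by
  simp only [onesVec', le_min_iff]
  split_ifs <;> first | omega | norm_num

lemma Pmat_eq_sum_vecMulVec (q : ℕ) :
    Pmat q = ∑ i ∈ Icc 1 (q - 1),
      (vecMulVec (onesVec q i) (onesVec q i) + vecMulVec (onesVec' q i) (onesVec' q i)) := by
  ext k l
  have hmax : max (k : ℕ) l ≤ q - 1 := by omega
  simp only [Matrix.sum_apply, Matrix.add_apply, vecMulVec_apply, onesVec_mul_onesVec,
    onesVec'_mul_onesVec', sum_add_distrib, sum_boole, card_filter_lt_Icc_one,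
    card_filter_le_Icc_one (min_le_max.trans hmax)]
  rw [Pmat, Nat.cast_sub hmax, Nat.cast_sub (by omega : 1 ≤ q), ← max_sub_min_eq_abs']
  push_cast
  ring

theorem Pmat_posSemidef_general (q : ℕ) :
    (Pmat q).PosSemidef ∧
      Pmat q = ∑ i ∈ Finset.Icc 1 (q - 1),
        (Matrix.vecMulVec (onesVec q i) (onesVec q i) +
          Matrix.vecMulVec (onesVec' q i) (onesVec' q i)) := by
  refine ⟨?_, Pmat_eq_sum_vecMulVec q⟩
  rw [Pmat_eq_sum_vecMulVec]
  exact posSemidef_sum _ fun i _ => (posSemidef_vecMulVec_self _).add (posSemidef_vecMulVec_self _)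

theorem Pmat_posSemidef (q : ℕ) (hq : 1 ≤ q) :
    (Pmat q).PosSemidef ∧
      Pmat q = ∑ i ∈ Finset.Icc 1 (q - 1),
        (Matrix.vecMulVec (onesVec q i) (onesVec q i) +
          Matrix.vecMulVec (onesVec' q i) (onesVec' q i)) :=
  Pmat_posSemidef_general q
end
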